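/- arXiv:2303.00096 — 3 statements merged into one kernel-verified Lean document; each statement's English description precedes it below -/
import Mathlib

section
/- Consider f : ℝ² → ℝ, f(x,y) = (1/2)(x²+1)y², a C^∞ function whose set of minimizers is the line S = {(x,0)}. For t ∈ (0, 1/3) let p(t) = (√((1-t)/3), √t). Then ∇²f(p(t)) is invertible, and the Newton iterate p(t) - ∇²f(p(t))⁻¹∇f(p(t)) lies at distance (2/3)(1-t)/√t from S. In particular, as t → 0⁺ the starting point tends to S while the Newton iterate's distance to S tends to +∞. -/
/-!
Along the curve `p(t)` the Hessian `[[y², 2xy], [2xy, x² + 1]]` has determinant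
`y²(1 - 3x²) = t²`, small of second order, while the gradient is only of order `√t`.
Cramer's rule gives the `y`-coordinate of the Newton iterate as `-2x²y / (1 - 3x²)`,
which at `x² = (1 - t)/3`, `y = √t` is `-(2/3)(1 - t)/√t`.
-/

open Metric Filter Topology Matrix

theorem infDist_setOf_apply_eq_zero {ι : Type*} [Fintype ι] (q : EuclideanSpace ℝ ι) (i : ι) :
    infDist q {q | q i = 0} = |q i| := by
  classical
  apply le_antisymm
  · calc infDist q {q | q i = 0} ≤ dist q (q - EuclideanSpace.single i (q i)) :=
          infDist_le_dist_of_mem (by simp)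
      _ = |q i| := by simp
  · refine (le_infDist ⟨0, by simp⟩).2 fun y (hy : y i = 0) => ?_
    simpa [hy, dist_eq_norm] using PiLp.norm_apply_le (q - y) i

theorem Matrix.bijective_toEuclideanCLM {𝕜 n : Type*} [RCLike 𝕜] [Fintype n] [DecidableEq n]
    {A : Matrix n n 𝕜} (hA : IsUnit A.det) : Function.Bijective (toEuclideanCLM (𝕜 := 𝕜) A) := by
  have hA' : IsUnit A := (isUnit_iff_isUnit_det A).2 hA
  have hmulVec : Function.Bijective (A *ᵥ ·) :=
    ⟨mulVec_injective_iff_isUnit.2 hA', mulVec_surjective_iff_isUnit.2 hA'⟩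
  exact (WithLp.equiv 2 _).symm.bijective.comp (hmulVec.comp (WithLp.equiv 2 _).bijective)

theorem Matrix.det_mul_apply_one_of_mulVec_eq {R : Type*} [CommRing R]
    {A : Matrix (Fin 2) (Fin 2) R} {w v : Fin 2 → R} (h : A *ᵥ w = v) :
    A.det * w 1 = A 0 0 * v 1 - A 1 0 * v 0 := by
  have := congrFun (congrArg (adjugate A *ᵥ ·) h) 1
  simp only [mulVec_mulVec, adjugate_mul, smul_mulVec, one_mulVec] at this
  simpa [adjugate_fin_two, mulVec, dotProduct, Fin.sum_univ_two, sub_eq_add_neg, add_comm]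
    using this

theorem Real.tendsto_sqrt_nhdsGT_zero : Tendsto Real.sqrt (𝓝[>] 0) (𝓝[>] 0) :=
  tendsto_nhdsWithin_of_tendsto_nhds_of_eventually_within _
    (by simpa using Real.continuous_sqrt.tendsto 0 |>.mono_left nhdsWithin_le_nhds)
    (eventually_nhdsWithin_of_forall fun _ ht => Real.sqrt_pos.2 ht)

namespace NewtonFailure

local notation "ℝ²" => EuclideanSpace ℝ (Fin 2)

noncomputable def grad (q : ℝ²) : ℝ² := !₂[q 0 * q 1 ^ 2, (q 0 ^ 2 + 1) * q 1]

def hess (q : ℝ²) : Matrix (Fin 2) (Fin 2) ℝ :=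
  !![q 1 ^ 2, 2 * q 0 * q 1; 2 * q 0 * q 1, q 0 ^ 2 + 1]

theorem hasGradientAt_grad (q : ℝ²) :
    HasGradientAt (fun q : ℝ² => 1 / 2 * (q 0 ^ 2 + 1) * q 1 ^ 2) (grad q) q := by
  have h0 := PiLp.hasFDerivAt_apply (𝕜 := ℝ) 2 q 0
  have h1 := PiLp.hasFDerivAt_apply (𝕜 := ℝ) 2 q 1
  rw [hasGradientAt_iff_hasFDerivAt]
  refine ((((h0.pow 2).add_const 1).const_mul (1 / 2)).mul (h1.pow 2)).congr_fderiv ?_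
  ext v
  simp only [_root_.add_apply, _root_.smul_apply, PiLp.proj_apply, smul_eq_mul, nsmul_eq_mul, grad,
    InnerProductSpace.toDual_apply_apply, PiLp.inner_apply, RCLike.inner_apply, conj_trivial,
    Fin.sum_univ_two, cons_val_zero, cons_val_one, cons_val_fin_one]
  ring

theorem hasFDerivAt_grad (q : ℝ²) : HasFDerivAt grad (toEuclideanCLM (𝕜 := ℝ) (hess q)) q := by
  have h0 := PiLp.hasFDerivAt_apply (𝕜 := ℝ) 2 q 0
  have h1 := PiLp.hasFDerivAt_apply (𝕜 := ℝ) 2 q 1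
  rw [← hasFDerivWithinAt_univ, hasFDerivWithinAt_piLp]
  intro i
  rw [hasFDerivWithinAt_univ]
  fin_cases i <;>
    [refine (h0.mul (h1.pow 2)).congr_fderiv ?_;
     refine (((h0.pow 2).add_const 1).mul h1).congr_fderiv ?_] <;>
    ext v <;>
    simp only [ContinuousLinearMap.comp_apply, PiLp.proj_apply, ofLp_toEuclideanCLM, hess, mulVec,
      dotProduct, Fin.sum_univ_two, of_apply, cons_val', cons_val_zero, cons_val_one,
      cons_val_fin_one, Fin.zero_eta, Fin.mk_one, _root_.add_apply, _root_.smul_apply, smul_eq_mul,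
      nsmul_eq_mul] <;>
    ring

theorem det_hess (q : ℝ²) : (hess q).det = q 1 ^ 2 * (1 - 3 * q 0 ^ 2) := by
  rw [hess, det_fin_two_of]
  ring

theorem sub_apply_one_of_hess_apply_eq_grad {q w : ℝ²} (hq1 : q 1 ≠ 0)
    (hq0 : 1 - 3 * q 0 ^ 2 ≠ 0) (hw : toEuclideanCLM (𝕜 := ℝ) (hess q) w = grad q) :
    (q - w) 1 = -2 * q 0 ^ 2 * q 1 / (1 - 3 * q 0 ^ 2) := by
  have hmulVec : hess q *ᵥ WithLp.ofLp w = WithLp.ofLp (grad q) := by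
    rw [← ofLp_toEuclideanCLM, hw]
  have hcramer := det_mul_apply_one_of_mulVec_eq hmulVec
  rw [det_hess] at hcramer
  simp only [hess, grad, of_apply, cons_val', cons_val_zero, cons_val_one, cons_val_fin_one]
    at hcramer
  rw [PiLp.sub_apply, eq_div_iff hq0]
  apply mul_left_cancel₀ (pow_ne_zero 2 hq1)
  linear_combination -hcramer

end NewtonFailure

open NewtonFailure in
/-- Failure of Newton's method near the non-isolated minima of
`f(x,y) = ½(x²+1)y²`: for `t ∈ (0, 1/3)` and `p(t) = (√((1-t)/3), √t)`, the Hessian at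
`p(t)` is invertible and the Newton iterate lies at distance `(2/3)(1-t)/√t` from the
solution line `S = {y = 0}`; as `t → 0⁺` the base point tends to `S` while the Newton
iterate's distance to `S` tends to `+∞`. -/
theorem newton_failure :
    letI f : EuclideanSpace ℝ (Fin 2) → ℝ :=
      fun q => (1 / 2) * ((q 0) ^ 2 + 1) * (q 1) ^ 2
    letI S : Set (EuclideanSpace ℝ (Fin 2)) := {q | q 1 = 0}
    letI p : ℝ → EuclideanSpace ℝ (Fin 2) :=
      fun t => (WithLp.equiv 2 (Fin 2 → ℝ)).symm ![Real.sqrt ((1 - t) / 3), Real.sqrt t]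
    (∀ t ∈ Set.Ioo (0 : ℝ) (1 / 3),
      Function.Bijective (fderiv ℝ (gradient f) (p t)) ∧
      ∀ w : EuclideanSpace ℝ (Fin 2),
        fderiv ℝ (gradient f) (p t) w = gradient f (p t) →
        Metric.infDist (p t - w) S = (2 / 3) * (1 - t) / Real.sqrt t) ∧
    Filter.Tendsto (fun t => Metric.infDist (p t) S) (𝓝[>] (0 : ℝ)) (𝓝 0) ∧
    Filter.Tendsto (fun t => (2 / 3) * (1 - t) / Real.sqrt t) (𝓝[>] (0 : ℝ)) Filter.atTop := by
  beta_reduce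
  rw [funext fun q => (hasGradientAt_grad q).gradient]
  refine ⟨fun t ⟨ht0, ht1⟩ => ?_, ?_, ?_⟩
  · set q : EuclideanSpace ℝ (Fin 2) := (WithLp.equiv 2 (Fin 2 → ℝ)).symm ![√((1 - t) / 3), √t]
    have hx : q 0 ^ 2 = (1 - t) / 3 := Real.sq_sqrt (by linarith)
    have hy : q 1 = √t := rfl
    have hdet : 1 - 3 * q 0 ^ 2 = t := by linarith
    have hsq : √t ^ 2 = t := Real.sq_sqrt ht0.le
    have hpos : 0 < √t := Real.sqrt_pos.2 ht0
    rw [(hasFDerivAt_grad q).fderiv]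
    refine ⟨bijective_toEuclideanCLM ?_, fun w hw => ?_⟩
    · rw [det_hess, hdet, hy, hsq]
      exact (mul_pos ht0 ht0).ne'.isUnit
    · have hnewton : -2 * q 0 ^ 2 * q 1 / (1 - 3 * q 0 ^ 2) = -(2 / 3 * (1 - t) / √t) := by
        rw [hdet, hx, hy]
        field_simp
        linear_combination (t - 1) * hsq
      rw [infDist_setOf_apply_eq_zero,
        sub_apply_one_of_hess_apply_eq_grad (hy ▸ hpos.ne') (hdet ▸ ht0.ne') hw, hnewton,
        abs_neg, abs_of_pos (by bound)]
  · simpa [infDist_setOf_apply_eq_zero, abs_of_nonneg (Real.sqrt_nonneg _)] using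
      tendsto_nhds_of_tendsto_nhdsWithin Real.tendsto_sqrt_nhdsGT_zero
  · have hconst : Tendsto (fun t : ℝ => 2 / 3 * (1 - t)) (𝓝[>] 0) (𝓝 (2 / 3)) :=
      ((by fun_prop : Continuous fun t : ℝ => 2 / 3 * (1 - t)).tendsto' 0 _
        (by norm_num)).mono_left nhdsWithin_le_nhds
    simp only [div_eq_mul_inv]
    exact hconst.pos_mul_atTop (by norm_num)
      Real.tendsto_sqrt_nhdsGT_zero.inv_tendsto_nhdsGT_zero
end

section
/- For f : ℝ² → ℝ, f(x,y) = (x²+y²-1)², whose minimizer set is the unit circle, fix Δ > 0 and for small t > 0 consider the point p(t) = (0, 1-t). The vectors s±(t) = (±√(Δ² - t²(t-2)²/(4(t-1)²)), t(t-2)/(2(t-1))) are global solutions of the trust-region subproblem min_{‖s‖≤Δ} ⟨s, ∇f(p(t))⟩ + (1/2)⟨s, ∇²f(p(t))s⟩, and as t → 0⁺ we have s±(t) → (±Δ, 0). In particular the exact trust-region step does not vanish as the base point approaches the solution set. -/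
open Metric Filter Topology
open scoped RealInnerProductSpace

/-!
The gradient and Hessian of `f q = (‖q‖² - 1)²` are `∇f(p) = 4(‖p‖² - 1) p` and
`∇²f(p) = 4(‖p‖² - 1) I + 8 p pᵀ`, so with the multiplier `λ = 4(1 - ‖p‖²)` the shifted Hessian
`∇²f(p) + λ I = 8 p pᵀ` is positive semidefinite whenever `‖p‖ ≤ 1`. The optimality conditions of
the trust-region subproblem then show that every `s` on the sphere of radius `Δ` with
`⟪p, s⟫ = (1 - ‖p‖²) / 2` is a global solution. For `p(t) = (0, 1 - t)` this pins the second
coordinate of `s` to `t(t - 2) / (2(t - 1)) → 0`, so both points of the sphere at that height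
tend to `(±Δ, 0)`.
-/

section

variable {E : Type*} [NormedAddCommGroup E] [InnerProductSpace ℝ E]

noncomputable def quadModel (g : E) (H : E →L[ℝ] E) (w : E) : ℝ := ⟪w, g⟫ + (1 / 2) * ⟪w, H w⟫

theorem isMinOn_quadModel_of_kkt {g s : E} {H : E →L[ℝ] E} {μ Δ : ℝ}
    (hH : (H : E →ₗ[ℝ] E).IsSymmetric) (hμ : 0 ≤ μ) (hpsd : ∀ v, 0 ≤ ⟪v, H v⟫ + μ * ‖v‖ ^ 2)
    (hstat : H s + μ • s = -g) (hcompl : μ * (Δ - ‖s‖) = 0) :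
    IsMinOn (quadModel g H) (closedBall 0 Δ) s := by
  intro w hw
  rw [mem_closedBall_zero_iff] at hw
  have hsym : ⟪s, H w⟫ = ⟪w, H s⟫ := by rw [real_inner_comm]; exact hH w s
  have hgap : quadModel g H w - quadModel g H s =
      (1 / 2) * (⟪w - s, H (w - s)⟫ + μ * ‖w - s‖ ^ 2) + μ / 2 * (‖s‖ ^ 2 - ‖w‖ ^ 2) := by
    rw [← neg_eq_iff_eq_neg.mpr hstat]
    simp only [quadModel, map_sub, inner_sub_left, inner_sub_right, inner_neg_right,
      inner_add_right, real_inner_smul_right, @norm_sub_sq_real, real_inner_self_eq_norm_sq, hsym,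
      real_inner_comm s w]
    ring
  have hball : μ * (‖s‖ ^ 2 - ‖w‖ ^ 2) = μ * (Δ ^ 2 - ‖w‖ ^ 2) := by
    linear_combination (-(‖s‖ + Δ)) * hcompl
  have hw2 : 0 ≤ Δ ^ 2 - ‖w‖ ^ 2 := by nlinarith [norm_nonneg w]
  show quadModel g H s ≤ quadModel g H w
  nlinarith [hpsd (w - s), mul_nonneg hμ hw2]

theorem hasGradientAt_sq_norm_sq_sub_one [CompleteSpace E] (x : E) :
    HasGradientAt (fun q : E => (‖q‖ ^ 2 - 1) ^ 2) ((4 * (‖x‖ ^ 2 - 1)) • x) x := by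
  rw [hasGradientAt_iff_hasFDerivAt]
  refine (((hasStrictFDerivAt_norm_sq x).hasFDerivAt.sub_const 1).pow 2).congr_fderiv ?_
  ext w
  simp [InnerProductSpace.toDual_apply_apply]
  ring

theorem hasFDerivAt_norm_sq_sub_one_smul (x : E) :
    HasFDerivAt (fun q : E => (4 * (‖q‖ ^ 2 - 1)) • q)
      ((4 * (‖x‖ ^ 2 - 1)) • ContinuousLinearMap.id ℝ E + (8 • innerSL ℝ x).smulRight x) x := by
  refine ((((hasStrictFDerivAt_norm_sq x).hasFDerivAt.sub_const 1).const_mul 4).smul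
    (hasFDerivAt_id x)).congr_fderiv ?_
  ext w
  simp
  congr 1
  ring

theorem gradient_sq_norm_sq_sub_one [CompleteSpace E] :
    gradient (fun q : E => (‖q‖ ^ 2 - 1) ^ 2) = fun x => (4 * (‖x‖ ^ 2 - 1)) • x :=
  funext fun x => (hasGradientAt_sq_norm_sq_sub_one x).gradient

theorem fderiv_gradient_sq_norm_sq_sub_one_apply [CompleteSpace E] (x w : E) :
    fderiv ℝ (gradient fun q : E => (‖q‖ ^ 2 - 1) ^ 2) x w =
      (4 * (‖x‖ ^ 2 - 1)) • w + (8 * ⟪x, w⟫) • x := by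
  rw [gradient_sq_norm_sq_sub_one, (hasFDerivAt_norm_sq_sub_one_smul x).fderiv]
  simp

theorem isMinOn_quadModel_sq_norm_sq_sub_one [CompleteSpace E] {p s : E} {Δ : ℝ}
    (hp : ‖p‖ ≤ 1) (hs : ‖s‖ = Δ) (hps : ⟪p, s⟫ = (1 - ‖p‖ ^ 2) / 2) :
    IsMinOn (quadModel (gradient (fun q : E => (‖q‖ ^ 2 - 1) ^ 2) p)
      (fderiv ℝ (gradient fun q : E => (‖q‖ ^ 2 - 1) ^ 2) p)) (closedBall 0 Δ) s := by
  refine isMinOn_quadModel_of_kkt (μ := 4 * (1 - ‖p‖ ^ 2)) (fun v w => ?_) ?_ (fun v => ?_) ?_ ?_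
  · simp only [ContinuousLinearMap.coe_coe, fderiv_gradient_sq_norm_sq_sub_one_apply,
      inner_add_left, inner_add_right, real_inner_smul_left, real_inner_smul_right,
      real_inner_comm p v]
    ring
  · nlinarith [norm_nonneg p]
  · simp only [fderiv_gradient_sq_norm_sq_sub_one_apply, inner_add_right, real_inner_smul_right,
      real_inner_self_eq_norm_sq, real_inner_comm p v]
    nlinarith [sq_nonneg ⟪p, v⟫]
  · rw [fderiv_gradient_sq_norm_sq_sub_one_apply, gradient_sq_norm_sq_sub_one, hps]
    module
  · rw [hs, sub_self, mul_zero]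

end

theorem EuclideanSpace.norm_sq_fin_two (q : EuclideanSpace ℝ (Fin 2)) :
    ‖q‖ ^ 2 = q 0 ^ 2 + q 1 ^ 2 := by
  rw [EuclideanSpace.real_norm_sq_eq, Fin.sum_univ_two]

theorem norm_toLp_sqrt_sq_sub_sq {Δ σ a : ℝ} (hσ : σ ∈ ({1, -1} : Set ℝ)) (hΔ : 0 ≤ Δ)
    (ha : |a| ≤ Δ) : ‖!₂[σ * √(Δ ^ 2 - a ^ 2), a]‖ = Δ := by
  have hσ2 : σ ^ 2 = 1 := by rcases hσ with rfl | rfl <;> norm_num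
  have ha2 : a ^ 2 ≤ Δ ^ 2 := sq_le_sq' (abs_le.1 ha).1 (abs_le.1 ha).2
  rw [← sq_eq_sq₀ (norm_nonneg _) hΔ, EuclideanSpace.norm_sq_fin_two]
  simp [mul_pow, hσ2, Real.sq_sqrt (sub_nonneg.2 ha2)]

theorem isMinOn_quadModel_toLp_sqrt_sq_sub_sq {Δ σ r a : ℝ} (hσ : σ ∈ ({1, -1} : Set ℝ))
    (hΔ : 0 ≤ Δ) (hr : |r| ≤ 1) (ha : |a| ≤ Δ) (hra : r * a = (1 - r ^ 2) / 2) :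
    IsMinOn (quadModel (gradient (fun q : EuclideanSpace ℝ (Fin 2) => (‖q‖ ^ 2 - 1) ^ 2) !₂[0, r])
      (fderiv ℝ (gradient fun q : EuclideanSpace ℝ (Fin 2) => (‖q‖ ^ 2 - 1) ^ 2) !₂[0, r]))
      (closedBall 0 Δ) !₂[σ * √(Δ ^ 2 - a ^ 2), a] := by
  have hp : ‖!₂[0, r]‖ ^ 2 = r ^ 2 := by simp [EuclideanSpace.norm_sq_fin_two]
  refine isMinOn_quadModel_sq_norm_sq_sub_one ?_ (norm_toLp_sqrt_sq_sub_sq hσ hΔ ha) ?_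
  · nlinarith [norm_nonneg !₂[0, r], abs_le.1 hr]
  · simpa [hp, PiLp.inner_apply, Fin.sum_univ_two, mul_comm] using hra

theorem eventually_lt_one_and_abs_le {Δ : ℝ} (hΔ : 0 < Δ) :
    ∀ᶠ t in 𝓝 (0 : ℝ), t < 1 ∧ |t * (t - 2) / (2 * (t - 1))| ≤ Δ := by
  have h0 : Tendsto (fun t : ℝ => t * (t - 2) / (2 * (t - 1))) (𝓝 0) (𝓝 0) := by
    have hcont : ContinuousAt (fun t : ℝ => t * (t - 2) / (2 * (t - 1))) 0 := by
      fun_prop (disch := norm_num)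
    simpa using hcont.tendsto
  filter_upwards [eventually_lt_nhds one_pos, h0 (closedBall_mem_nhds 0 hΔ)] with t ht ha
  exact ⟨ht, mem_closedBall_zero_iff.1 ha⟩

/-- Failure of the exact trust-region step near the non-isolated minima of
`f(x,y) = (x²+y²-1)²`: at `p(t) = (0, 1-t)` for small `t > 0`, the vectors `s±(t)` are global
solutions of the trust-region subproblem with radius `Δ`, and `s±(t) → (±Δ, 0)` as `t → 0⁺`;
so the exact step does not vanish as the base point approaches the solution set. -/
theorem trust_region_failure (Δ : ℝ) (hΔ : 0 < Δ) :
    letI f : EuclideanSpace ℝ (Fin 2) → ℝ := fun q => ((q 0) ^ 2 + (q 1) ^ 2 - 1) ^ 2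
    letI p : ℝ → EuclideanSpace ℝ (Fin 2) :=
      fun t => (WithLp.equiv 2 (Fin 2 → ℝ)).symm ![0, 1 - t]
    letI s : ℝ → ℝ → EuclideanSpace ℝ (Fin 2) := fun σ t =>
      (WithLp.equiv 2 (Fin 2 → ℝ)).symm
        ![σ * Real.sqrt (Δ ^ 2 - t ^ 2 * (t - 2) ^ 2 / (4 * (t - 1) ^ 2)),
          t * (t - 2) / (2 * (t - 1))]
    letI m : ℝ → EuclideanSpace ℝ (Fin 2) → ℝ := fun t w =>
      ⟪w, gradient f (p t)⟫ + (1 / 2) * ⟪w, fderiv ℝ (gradient f) (p t) w⟫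
    (∃ t₀ > (0 : ℝ), ∀ t ∈ Set.Ioo (0 : ℝ) t₀, ∀ σ ∈ ({1, -1} : Set ℝ),
      ‖s σ t‖ ≤ Δ ∧ ∀ w : EuclideanSpace ℝ (Fin 2), ‖w‖ ≤ Δ → m t (s σ t) ≤ m t w) ∧
    ∀ σ ∈ ({1, -1} : Set ℝ),
      Filter.Tendsto (fun t => s σ t) (𝓝[>] (0 : ℝ))
        (𝓝 ((WithLp.equiv 2 (Fin 2 → ℝ)).symm ![σ * Δ, 0])) := by
  have hsq (t : ℝ) :
      t ^ 2 * (t - 2) ^ 2 / (4 * (t - 1) ^ 2) = (t * (t - 2) / (2 * (t - 1))) ^ 2 := by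
    rw [div_pow, mul_pow, mul_pow]
    norm_num
  simp only [← EuclideanSpace.norm_sq_fin_two, hsq, WithLp.equiv_symm_apply]
  refine ⟨?_, fun σ hσ => ?_⟩
  · obtain ⟨t₀, ht₀, hsub⟩ :=
      mem_nhdsGT_iff_exists_Ioo_subset.1 (nhdsWithin_le_nhds (eventually_lt_one_and_abs_le hΔ))
    refine ⟨t₀, ht₀, fun t ht σ hσ => ?_⟩
    obtain ⟨ht1, ha⟩ := hsub ht
    have hr : |1 - t| ≤ 1 := abs_le.2 ⟨by linarith [ht.1], by linarith [ht.1]⟩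
    have hra : (1 - t) * (t * (t - 2) / (2 * (t - 1))) = (1 - (1 - t) ^ 2) / 2 := by
      field_simp [sub_ne_zero.2 ht1.ne]
      ring
    exact ⟨(norm_toLp_sqrt_sq_sub_sq hσ hΔ.le ha).le, fun w hw =>
      isMinOn_quadModel_toLp_sqrt_sq_sub_sq hσ hΔ.le hr ha hra (mem_closedBall_zero_iff.2 hw)⟩
  · have hs : ContinuousAt (fun t : ℝ =>
        !₂[σ * √(Δ ^ 2 - (t * (t - 2) / (2 * (t - 1))) ^ 2), t * (t - 2) / (2 * (t - 1))]) 0 := by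
      fun_prop (disch := norm_num)
    simpa [Real.sqrt_sq hΔ.le] using hs.tendsto.mono_left nhdsWithin_le_nhds
end

section
/- Let f : ℝⁿ → ℝ be differentiable and suppose a sequence (x_k) converges to x̄, where x̄ is a local minimum with value f* around which the PL inequality f(x) - f* ≤ (1/(2μ))‖∇f(x)‖² holds. If the sequence eventually satisfies the sufficient decrease f(x_k) - f(x_{k+1}) ≥ ω‖∇f(x_k)‖² with ω > 0 and 2ωμ ≤ 1, then f(x_k) - f* converges to 0 at the linear rate 1 - 2ωμ, i.e., f(x_{k+1}) - f* ≤ (1 - 2ωμ)(f(x_k) - f*) for all large k; moreover ‖∇f(x_k)‖ ≤ √((f(x_k)-f*)/ω) and dist(x_k, S) ≤ √((2/μ)(f(x_k)-f*)) for all large k, where S is the set of local minima with value f*. -/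
/-!
Sufficient decrease gives `f (x k) - f (x (k+1)) ≥ ω ‖∇f (x k)‖²`, and PL at `x k` bounds the
right side below by `2ωμ (f (x k) - f xb)`; this is the linear rate, and since
`f (x (k+1)) ≥ f xb` near the local minimum it also bounds the gradient.

The distance bound is the quadratic growth implied by PL. By PL, `g = √(f - f xb)` has slope
at least `√(μ/2)` wherever it is positive. For `c < √(μ/2)`, a minimiser over a small compact
ball of `g + c * dist · x` cannot be a point where `g > 0` (there the slope of `g` beats the
penalty, which is `c`-Lipschitz), so it is a zero of `g`, hence a local minimiser with value
`f xb`, and comparison with `x` puts it within `g x / c`. Letting `c → √(μ/2)` gives the bound.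
-/

open Metric Filter Topology
open scoped NNReal

section NormedSpace

variable {E : Type*} [NormedAddCommGroup E] [NormedSpace ℝ E]

theorem norm_le_of_isLocalMin_add_lipschitzWith {g ψ : E → ℝ} {g' : E →L[ℝ] ℝ} {y : E}
    {K : ℝ≥0} (hmin : IsLocalMin (fun z => g z + ψ z) y) (hψ : LipschitzWith K ψ)
    (hg : HasFDerivAt g g' y) : ‖g'‖ ≤ K := by
  have hlower : ∀ u, -(K * ‖u‖) ≤ g' u := by
    intro u
    have hline : HasDerivAt (fun t : ℝ => y + t • u) u 0 := by
      simpa using ((hasDerivAt_id (0 : ℝ)).smul_const u).const_add y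
    have hφ : HasDerivAt (fun t : ℝ => g (y + t • u) + K * ‖u‖ * t) (g' u + K * ‖u‖) 0 := by
      have hg₀ : HasFDerivAt g g' (y + (0 : ℝ) • u) := by simpa using hg
      exact ((hg₀.comp_hasDerivAt 0 hline).add
        ((hasDerivAt_id (0 : ℝ)).const_mul (K * ‖u‖))).congr_deriv (by simp)
    have hφmin : IsLocalMinOn (fun t : ℝ => g (y + t • u) + K * ‖u‖ * t) (Set.Ici 0) 0 := by
      have hto : Tendsto (fun t : ℝ => y + t • u) (𝓝 0) (𝓝 y) := by
        simpa using hline.continuousAt.tendsto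
      have hnear : ∀ᶠ t in 𝓝 (0 : ℝ), g y + ψ y ≤ g (y + t • u) + ψ (y + t • u) :=
        hto.eventually hmin
      filter_upwards [nhdsWithin_le_nhds hnear, self_mem_nhdsWithin] with t ht (ht0 : 0 ≤ t)
      have hlip : ψ (y + t • u) ≤ ψ y + K * (t * ‖u‖) := by
        simpa [dist_eq_norm, norm_smul, abs_of_nonneg ht0] using hψ.le_add_mul (y + t • u) y
      simp only [zero_smul, add_zero, mul_zero]
      linarith
    have hcone : (1 : ℝ) ∈ posTangentConeAt (Set.Ici 0) (0 : ℝ) :=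
      mem_posTangentConeAt_of_segment_subset (by simp [Set.Icc_subset_Ici_self])
    have := hφmin.hasFDerivWithinAt_nonneg hφ.hasDerivWithinAt.hasFDerivWithinAt hcone
    simp only [ContinuousLinearMap.toSpanSingleton_apply, smul_eq_mul, one_mul] at this
    linarith
  refine g'.opNorm_le_bound K.2 fun u => abs_le.2 ⟨hlower u, ?_⟩
  simpa using hlower (-u)

theorem exists_eq_zero_dist_le_of_lt_norm_fderiv [ProperSpace E] {g : E → ℝ} {a x : E}
    {r c : ℝ} (hc : 0 < c) (hg : ContinuousOn g (closedBall a r))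
    (hg0 : 0 ≤ g)
    (hslope : ∀ y ∈ ball a r, g y ≠ 0 →
      ∃ g' : E →L[ℝ] ℝ, HasFDerivAt g g' y ∧ c < ‖g'‖)
    (hx : dist x a + g x / c < r) :
    ∃ y ∈ ball a r, g y = 0 ∧ dist x y ≤ g x / c := by
  have hxball : x ∈ closedBall a r :=
    mem_closedBall.2 (by linarith [div_nonneg (show 0 ≤ g x from hg0 x) hc.le])
  have hcont : ContinuousOn (fun z => g z + c * dist z x) (closedBall a r) :=
    hg.add (continuous_const.mul (continuous_id.dist continuous_const)).continuousOn
  obtain ⟨y, hyB, hymin⟩ := (isCompact_closedBall a r).exists_isMinOn ⟨x, hxball⟩ hcont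
  have hyx : g y + c * dist y x ≤ g x := by simpa using hymin hxball
  have hdist : dist x y ≤ g x / c := by
    rw [dist_comm, le_div_iff₀ hc]
    linarith [show 0 ≤ g y from hg0 y]
  have hy : y ∈ ball a r := mem_ball.2 (by linarith [dist_triangle y x a, dist_comm x y])
  refine ⟨y, hy, ?_, hdist⟩
  by_contra hgy
  obtain ⟨g', hg', hcg'⟩ := hslope y hy hgy
  have hloc : IsLocalMin (fun z => g z + c * dist z x) y :=
    hymin.isLocalMin (closedBall_mem_nhds_of_mem hy)
  have hlip : LipschitzWith c.toNNReal (fun z => c * dist z x) :=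
    .of_le_add_mul' c fun z w => by
      rw [← mul_add]
      exact mul_le_mul_of_nonneg_left ((dist_triangle z w x).trans_eq (add_comm _ _)) hc.le
  have := norm_le_of_isLocalMin_add_lipschitzWith hloc hlip hg'
  rw [Real.coe_toNNReal c hc.le] at this
  exact this.not_gt hcg'

end NormedSpace

section InnerProductSpace

variable {E : Type*} [NormedAddCommGroup E] [InnerProductSpace ℝ E]

theorem exists_hasFDerivAt_sqrt_sub_of_PL [CompleteSpace E] {f : E → ℝ} {m μ : ℝ} {y : E}
    (hμ : 0 < μ) (hf : DifferentiableAt ℝ f y) (hy : m < f y)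
    (hPL : f y - m ≤ 1 / (2 * μ) * ‖gradient f y‖ ^ 2) :
    ∃ g' : E →L[ℝ] ℝ, HasFDerivAt (fun z => √(f z - m)) g' y ∧ √(μ / 2) ≤ ‖g'‖ := by
  have he : 0 < f y - m := sub_pos.2 hy
  refine ⟨(1 / (2 * √(f y - m))) • fderiv ℝ f y,
    (Real.hasDerivAt_sqrt he.ne').comp_hasFDerivAt y (hf.hasFDerivAt.sub_const m), ?_⟩
  have hnorm : ‖fderiv ℝ f y‖ = ‖gradient f y‖ := by simp [gradient]
  have hgrad : 2 * μ * (f y - m) ≤ ‖gradient f y‖ ^ 2 :=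
    (le_div_iff₀' (by positivity)).1 (hPL.trans_eq (one_div_mul_eq_div _ _))
  rw [norm_smul, hnorm, Real.sqrt_le_iff]
  refine ⟨by positivity, ?_⟩
  rw [mul_pow, Real.norm_eq_abs, sq_abs, div_pow, mul_pow, Real.sq_sqrt he.le]
  field_simp
  nlinarith

theorem exists_isLocalMin_dist_le_of_PL [ProperSpace E] {f : E → ℝ} {a x : E} {μ r c : ℝ}
    (hμ : 0 < μ) (hball : ∀ y ∈ ball a r, f a ≤ f y ∧ DifferentiableAt ℝ f y ∧
      f y - f a ≤ 1 / (2 * μ) * ‖gradient f y‖ ^ 2)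
    (hc : 0 < c) (hcμ : c < √(μ / 2)) (hx : dist x a + √(f x - f a) / c < r) :
    ∃ y ∈ {y | IsLocalMin f y ∧ f y = f a}, dist x y ≤ √(f x - f a) / c := by
  obtain ⟨r', hxr', hr'⟩ := exists_between hx
  have hsub : closedBall a r' ⊆ ball a r := closedBall_subset_ball hr'
  obtain ⟨y, hy, hgy, hxy⟩ :=
    exists_eq_zero_dist_le_of_lt_norm_fderiv (g := fun z => √(f z - f a)) hc
    (continuousOn_of_forall_continuousAt fun z hz =>
      ((hball z (hsub hz)).2.1.continuousAt.sub continuousAt_const).sqrt)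
    (fun z => Real.sqrt_nonneg _)
    (fun z hz hgz => by
      obtain ⟨hfz, hdz, hPLz⟩ := hball z (hsub (ball_subset_closedBall hz))
      obtain ⟨g', hg', hnorm⟩ := exists_hasFDerivAt_sqrt_sub_of_PL hμ hdz
        (hfz.lt_of_ne fun h => hgz (by simp [← h])) hPLz
      exact ⟨g', hg', hcμ.trans_le hnorm⟩) hxr'
  have hyr : y ∈ ball a r := hsub (ball_subset_closedBall hy)
  have hfy : f y = f a :=
    le_antisymm (sub_nonpos.1 (Real.sqrt_eq_zero'.1 hgy)) (hball y hyr).1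
  have hymin : IsLocalMin f y :=
    eventually_of_mem (isOpen_ball.mem_nhds hyr) fun z hz => hfy ▸ (hball z hz).1
  exact ⟨y, ⟨hymin, hfy⟩, hxy⟩

theorem IsLocalMin.eventually_infDist_le_sqrt [ProperSpace E] {f : E → ℝ} {a : E} {μ : ℝ}
    (ha : IsLocalMin f a) (hμ : 0 < μ) (hf : ∀ᶠ y in 𝓝 a, DifferentiableAt ℝ f y)
    (hPL : ∀ᶠ y in 𝓝 a, f y - f a ≤ 1 / (2 * μ) * ‖gradient f y‖ ^ 2) :
    ∀ᶠ x in 𝓝 a, infDist x {y | IsLocalMin f y ∧ f y = f a} ≤ √(2 / μ * (f x - f a)) := by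
  obtain ⟨r, hr, hball⟩ := eventually_nhds_iff_ball.1 (ha.and (hf.and hPL))
  set c := √(μ / 2)
  have hc : 0 < c := Real.sqrt_pos.2 (by positivity)
  have hgap : Tendsto (fun x => √(f x - f a)) (𝓝 a) (𝓝 0) := by
    simpa using (((hball a (mem_ball_self hr)).2.1.continuousAt.sub
      (continuousAt_const : ContinuousAt (fun _ => f a) a)).sqrt).tendsto
  filter_upwards [ball_mem_nhds a (by positivity : 0 < r / 2),
    hgap.eventually (gt_mem_nhds (by positivity : 0 < c * r / 4))] with x hxa hgx
  have hbound : ∀ c' ∈ Set.Ioo (c / 2) c,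
      infDist x {y | IsLocalMin f y ∧ f y = f a} ≤ √(f x - f a) / c' := by
    rintro c' ⟨hc'1, hc'2⟩
    have hc' : 0 < c' := by linarith
    have hxr : dist x a + √(f x - f a) / c' < r := by
      have h1 : √(f x - f a) / c' ≤ √(f x - f a) / (c / 2) :=
        div_le_div_of_nonneg_left (Real.sqrt_nonneg _) (by positivity) hc'1.le
      have h2 : √(f x - f a) / (c / 2) < r / 2 := by
        rw [div_lt_iff₀ (by positivity)]; linarith
      linarith [mem_ball.1 hxa]
    obtain ⟨y, hyS, hxy⟩ := exists_isLocalMin_dist_le_of_PL hμ hball hc' hc'2 hxr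
    exact (infDist_le_dist_of_mem hyS).trans hxy
  have hlim : Tendsto (fun c' => √(f x - f a) / c') (𝓝[<] c) (𝓝 (√(f x - f a) / c)) :=
    ((continuousAt_const.div continuousAt_id hc.ne').tendsto).mono_left nhdsWithin_le_nhds
  calc infDist x {y | IsLocalMin f y ∧ f y = f a}
      ≤ √(f x - f a) / c :=
        ge_of_tendsto hlim (eventually_of_mem (Ioo_mem_nhdsLT (by linarith)) hbound)
    _ = √(2 / μ * (f x - f a)) := by
      rw [← Real.sqrt_div' _ (by positivity : 0 ≤ μ / 2)]
      congr 1
      field_simp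

end InnerProductSpace

theorem linear_rate_sufficient_decrease_general {n : ℕ}
    (f : EuclideanSpace ℝ (Fin n) → ℝ) (hf : Differentiable ℝ f)
    (xb : EuclideanSpace ℝ (Fin n)) (hmin : IsLocalMin f xb)
    (μ ω : ℝ) (hμ : 0 < μ) (hω : 0 < ω)
    (S : Set (EuclideanSpace ℝ (Fin n)))
    (hS : S = {y | IsLocalMin f y ∧ f y = f xb})
    (x : ℕ → EuclideanSpace ℝ (Fin n))
    (hconv : Filter.Tendsto x Filter.atTop (𝓝 xb))
    (hPL : ∀ᶠ y in 𝓝 xb, f y - f xb ≤ (1 / (2 * μ)) * ‖gradient f y‖ ^ 2)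
    (hdec : ∀ᶠ k in Filter.atTop, ω * ‖gradient f (x k)‖ ^ 2 ≤ f (x k) - f (x (k + 1))) :
    ∀ᶠ k in Filter.atTop,
      f (x (k + 1)) - f xb ≤ (1 - 2 * ω * μ) * (f (x k) - f xb) ∧
      ‖gradient f (x k)‖ ≤ Real.sqrt ((f (x k) - f xb) / ω) ∧
      Metric.infDist (x k) S ≤ Real.sqrt ((2 / μ) * (f (x k) - f xb)) := by
  have hQG := hmin.eventually_infDist_le_sqrt hμ (.of_forall hf) hPL
  have hnext : ∀ᶠ k in atTop, f xb ≤ f (x (k + 1)) :=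
    (hconv.comp (tendsto_add_atTop_nat 1)).eventually hmin
  filter_upwards [hconv.eventually hPL, hconv.eventually hQG, hnext, hdec]
    with k hPLk hQGk hnextk hdeck
  have hgrad : 2 * μ * (f (x k) - f xb) ≤ ‖gradient f (x k)‖ ^ 2 :=
    (le_div_iff₀' (by positivity)).1 (hPLk.trans_eq (one_div_mul_eq_div _ _))
  refine ⟨by nlinarith [mul_le_mul_of_nonneg_left hgrad hω.le], ?_, hS ▸ hQGk⟩
  have hgap : ω * ‖gradient f (x k)‖ ^ 2 ≤ f (x k) - f xb := by linarith
  rw [Real.le_sqrt (norm_nonneg _) (div_nonneg ((by positivity : (0 : ℝ) ≤ _).trans hgap) hω.le),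
    le_div_iff₀' hω]
  exact hgap

/-- Linear convergence under PL and sufficient decrease: if `(x_k)` converges to a local
minimum `xb` around which the PL inequality holds, and the sufficient decrease
`f(x_k) - f(x_{k+1}) ≥ ω‖∇f(x_k)‖²` holds eventually, then `f(x_k) - f*` decays linearly
with rate `1 - 2ωμ`, and the gradient norms and distances to the solution set are bounded
accordingly. -/
theorem linear_rate_sufficient_decrease {n : ℕ}
    (f : EuclideanSpace ℝ (Fin n) → ℝ) (hf : Differentiable ℝ f)
    (xb : EuclideanSpace ℝ (Fin n)) (hmin : IsLocalMin f xb)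
    (μ ω : ℝ) (hμ : 0 < μ) (hω : 0 < ω) (hωμ : 2 * ω * μ ≤ 1)
    (S : Set (EuclideanSpace ℝ (Fin n)))
    (hS : S = {y | IsLocalMin f y ∧ f y = f xb})
    (x : ℕ → EuclideanSpace ℝ (Fin n))
    (hconv : Filter.Tendsto x Filter.atTop (𝓝 xb))
    (hPL : ∀ᶠ y in 𝓝 xb, f y - f xb ≤ (1 / (2 * μ)) * ‖gradient f y‖ ^ 2)
    (hdec : ∀ᶠ k in Filter.atTop, ω * ‖gradient f (x k)‖ ^ 2 ≤ f (x k) - f (x (k + 1))) :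
    ∀ᶠ k in Filter.atTop,
      f (x (k + 1)) - f xb ≤ (1 - 2 * ω * μ) * (f (x k) - f xb) ∧
      ‖gradient f (x k)‖ ≤ Real.sqrt ((f (x k) - f xb) / ω) ∧
      Metric.infDist (x k) S ≤ Real.sqrt ((2 / μ) * (f (x k) - f xb)) :=
  linear_rate_sufficient_decrease_general f hf xb hmin μ ω hμ hω S hS x hconv hPL hdec
end
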